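/- arXiv:0710.4453 — 4 statements merged into one kernel-verified Lean document; each statement's English description precedes it below -/
import Mathlib

section
/- A regular pentagon cannot be realized with all vertices having rational coordinates in the plane: there do not exist five points in ℚ² that are the vertices of a regular pentagon. -/
/-!
If the vertices `aₖ = c + z ζ^k` (`ζ = exp (2πi/5)`, `z ≠ 0`) all lie in the field `ℚ(i)`,
then so does `ζ = (a₂ - a₁) / (a₁ - a₀)`, so `Re ζ = cos (2π/5) = (√5 - 1)/4` would be rational.
-/

open Real

/-- The field `K(i) = K + K i` inside `ℂ`. -/
def Subfield.complexify (K : Subfield ℝ) : Subfield ℂ where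
  carrier := {z | z.re ∈ K ∧ z.im ∈ K}
  zero_mem' := by simp [zero_mem]
  one_mem' := by simp [zero_mem, one_mem]
  add_mem' ha hb := ⟨add_mem ha.1 hb.1, add_mem ha.2 hb.2⟩
  neg_mem' ha := ⟨neg_mem ha.1, neg_mem ha.2⟩
  mul_mem' ha hb := by
    simp only [Set.mem_ofPred_eq, Complex.mul_re, Complex.mul_im]
    exact ⟨sub_mem (mul_mem ha.1 hb.1) (mul_mem ha.2 hb.2),
      add_mem (mul_mem ha.1 hb.2) (mul_mem ha.2 hb.1)⟩
  inv_mem' z hz := by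
    have hn : Complex.normSq z ∈ K := by
      rw [Complex.normSq_apply]; exact add_mem (mul_mem hz.1 hz.1) (mul_mem hz.2 hz.2)
    simp only [Set.mem_ofPred_eq, Complex.inv_re, Complex.inv_im]
    exact ⟨div_mem hz.1 hn, div_mem (neg_mem hz.2) hn⟩

theorem Real.cos_two_pi_div_five : cos (2 * π / 5) = (√5 - 1) / 4 := by
  have h5 : √5 ^ 2 = 5 := sq_sqrt (by norm_num)
  rw [show 2 * π / 5 = 2 * (π / 5) by ring, cos_two_mul, cos_pi_div_five]
  linear_combination h5 / 8

theorem irrational_cos_two_pi_div_five : Irrational (cos (2 * π / 5)) := by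
  rw [cos_two_pi_div_five]
  have := (Nat.prime_five.irrational_sqrt).sub_natCast 1
  push_cast at this
  exact this.div_natCast (m := 4) (by norm_num)

theorem Complex.sub_div_sub_eq_of_ne_one {c z ζ : ℂ} (hz : z ≠ 0) (hζ : ζ ≠ 1) :
    (c + z * ζ ^ 2 - (c + z * ζ)) / (c + z * ζ - (c + z)) = ζ := by
  have : c + z * ζ - (c + z) ≠ 0 := by
    rw [show c + z * ζ - (c + z) = z * (ζ - 1) by ring]
    exact mul_ne_zero hz (sub_ne_zero.2 hζ)
  rw [div_eq_iff this]; ring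

/-- A regular pentagon (the image of the fifth roots of unity under a direct
similarity of the plane, identified with ℂ) cannot have all five vertices
with rational coordinates. -/
theorem no_rational_regular_pentagon :
    ¬ ∃ (w : Fin 5 → ℚ × ℚ) (c z : ℂ), z ≠ 0 ∧
      ∀ k : Fin 5,
        ((w k).1 : ℂ) + ((w k).2 : ℂ) * Complex.I =
          c + z * Complex.exp (2 * Real.pi * Complex.I * (k : ℕ) / 5) := by
  rintro ⟨w, c, z, hz, hw⟩
  set ℚi := (Rat.castHom ℝ).fieldRange.complexify
  set ζ := Complex.exp (2 * π * Complex.I / 5)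
  have hvertex (k : Fin 5) : c + z * ζ ^ (k : ℕ) ∈ ℚi := by
    rw [← Complex.exp_nat_mul, mul_div_assoc', mul_comm _ (2 * π * Complex.I), ← hw]
    constructor <;> simp
  have hζ : ζ ∈ ℚi := by
    rcases eq_or_ne ζ 1 with h1 | h1
    · rw [h1]; exact one_mem _
    · rw [← Complex.sub_div_sub_eq_of_ne_one (c := c) hz h1]
      simpa using div_mem (sub_mem (hvertex 2) (hvertex 1)) (sub_mem (hvertex 1) (hvertex 0))
  apply irrational_cos_two_pi_div_five
  have hre : ζ.re = cos (2 * π / 5) := by simp [ζ, Complex.exp_re]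
  simpa [hre] using hζ.1
end

section
/- The extended pentagon configuration has no realization with all coordinates rational: there is no assignment of 11 points in ℚ² realizing exactly the prescribed collinearities of the pentagon configuration (vertices, diagonal intersection points, and center of a pentagon). -/
/-!
After an affine change of coordinates, the vertices `0`, `1` and the centre `10` are `(0,0)`,
`(1,0)`, `(0,1)`; write `(a,b), (c,d), (e,f)` for the vertices `2, 3, 4`. Each diagonal point lies
on three lines of the configuration, and the concurrency of these three lines is a determinant
equation, linear in `(e,f)`. Eliminating `(e,f)` from two triples of these five equations
leaves two relations between `a, b, c, d`, which force the ratio of signed areas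
`ρ = [0 1 3][2 3 10] / ([0 3 10][1 2 3])` to satisfy `ρ² + 3ρ + 1 = 0`, i.e. `ρ = -φ^{±2}` with
`φ` the golden ratio. So `5` is a square in the field of coordinates, which it is not in `ℚ`.
-/

/-- The ten lines of the extended pentagon configuration 𝒞₁₁: points 0–4 are
the pentagon vertices, 5–9 the diagonal intersection points, 10 the center.
Five lines (the diagonals) contain four points each, and five lines (the
symmetry lines) contain three points each. -/
def pentagonLines : List (List (Fin 11)) :=
  [[0, 2, 5, 6], [0, 3, 8, 9], [0, 7, 10], [1, 3, 5, 7], [1, 4, 6, 9],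
   [1, 8, 10], [2, 4, 7, 8], [2, 9, 10], [3, 6, 10], [4, 5, 10]]

open Matrix

variable {K : Type*} [Field K]

def orient (p q r : K × K) : K :=
  (q.1 - p.1) * (r.2 - p.2) - (q.2 - p.2) * (r.1 - p.1)

@[simp] theorem orient_self_left (p q : K × K) : orient p p q = 0 := by simp [orient]

@[simp] theorem orient_self_right (p q : K × K) : orient p q q = 0 := by
  simp only [orient]; ring

@[simp] theorem orient_self_outer (p q : K × K) : orient p q p = 0 := by simp [orient]

theorem exists_smul_eq_of_cross_eq_zero {u v : K × K} (hu : u ≠ 0)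
    (h : u.1 * v.2 - u.2 * v.1 = 0) : ∃ t : K, v = t • u := by
  obtain ⟨u₁, u₂⟩ := u
  obtain ⟨v₁, v₂⟩ := v
  dsimp only at h
  by_cases h₁ : u₁ = 0
  · have h₂ : u₂ ≠ 0 := fun h₂ => hu (by simp [h₁, h₂])
    have hv₁ : v₁ = 0 := by simpa [h₁, h₂] using h
    exact ⟨v₂ / u₂, by simp [h₁, hv₁, h₂]⟩
  · refine ⟨v₁ / u₁, ?_⟩
    ext
    · simp [h₁]
    · simp only [Prod.smul_snd, smul_eq_mul]
      field_simp
      linear_combination h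

theorem collinear_iff_orient_eq_zero (p q r : K × K) :
    Collinear K ({p, q, r} : Set (K × K)) ↔ orient p q r = 0 := by
  rw [collinear_iff_of_mem (Set.mem_insert p _)]
  constructor
  · rintro ⟨v, hv⟩
    obtain ⟨s, rfl⟩ := hv q (by simp)
    obtain ⟨t, rfl⟩ := hv r (by simp)
    simp only [orient, vadd_eq_add, Prod.fst_add, Prod.snd_add, Prod.smul_fst, Prod.smul_snd,
      smul_eq_mul]
    ring
  · intro h
    by_cases hqp : q = p
    · subst hqp
      refine ⟨r - q, ?_⟩
      rintro x (rfl | rfl | rfl)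
      · exact ⟨0, by simp⟩
      · exact ⟨0, by simp⟩
      · exact ⟨1, by simp⟩
    · obtain ⟨t, ht⟩ := exists_smul_eq_of_cross_eq_zero (u := q - p) (v := r - p)
        (sub_ne_zero.mpr hqp) (by simpa [orient] using h)
      refine ⟨q - p, ?_⟩
      rintro x (rfl | rfl | rfl)
      · exact ⟨0, by simp⟩
      · exact ⟨1, by simp⟩
      · exact ⟨t, by rw [vadd_eq_add, ← ht, sub_add_cancel]⟩

def frameCoords (a b c p : K × K) : K × K :=
  (orient a p c / orient a b c, orient a b p / orient a b c)

theorem orient_frameCoords {a b c : K × K} (h : orient a b c ≠ 0) (p q r : K × K) :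
    orient (frameCoords a b c p) (frameCoords a b c q) (frameCoords a b c r) =
      orient p q r / orient a b c := by
  calc _ = (orient a b c)⁻¹ ^ 2 * orient (orient a p c, orient a b p)
        (orient a q c, orient a b q) (orient a r c, orient a b r) := by
          simp only [frameCoords, orient]; ring
    _ = (orient a b c)⁻¹ ^ 2 * (orient a b c * orient p q r) := by
          congr 1; simp only [orient]; ring
    _ = orient p q r / orient a b c := by field_simp

theorem frameCoords_left (a b c : K × K) : frameCoords a b c a = (0, 0) := by
  simp [frameCoords]

theorem frameCoords_middle {a b c : K × K} (h : orient a b c ≠ 0) :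
    frameCoords a b c b = (1, 0) := by
  simp [frameCoords, h]

theorem frameCoords_right {a b c : K × K} (h : orient a b c ≠ 0) :
    frameCoords a b c c = (0, 1) := by
  simp [frameCoords, h]

def lineThrough (p q : K × K) : Fin 3 → K :=
  ![p.2 - q.2, q.1 - p.1, p.1 * q.2 - p.2 * q.1]

theorem lineThrough_dotProduct (p q r : K × K) :
    lineThrough p q ⬝ᵥ ![r.1, r.2, 1] = orient p q r := by
  rw [lineThrough, vec3_dotProduct', orient]
  ring

theorem det_eq_zero_of_dotProduct_eq_zero {u v w : Fin 3 → K} (x y : K)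
    (hu : u ⬝ᵥ ![x, y, 1] = 0) (hv : v ⬝ᵥ ![x, y, 1] = 0) (hw : w ⬝ᵥ ![x, y, 1] = 0) :
    (Matrix.of ![u, v, w]).det = 0 := by
  refine exists_mulVec_eq_zero_iff.mp ⟨![x, y, 1], fun h => by simpa using congrFun h 2, ?_⟩
  ext i
  fin_cases i
  exacts [hu, hv, hw]

theorem det_lineThrough_eq_zero {p₁ q₁ p₂ q₂ p₃ q₃ r : K × K}
    (h₁ : orient p₁ q₁ r = 0) (h₂ : orient p₂ q₂ r = 0) (h₃ : orient p₃ q₃ r = 0) :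
    (Matrix.of ![lineThrough p₁ q₁, lineThrough p₂ q₂, lineThrough p₃ q₃]).det = 0 := by
  refine det_eq_zero_of_dotProduct_eq_zero r.1 r.2 ?_ ?_ ?_ <;>
    rwa [lineThrough_dotProduct]

theorem isSquare_five_of_sq_add_three_mul_add_sq_eq_zero {x y : K} (hy : y ≠ 0)
    (h : x ^ 2 + 3 * x * y + y ^ 2 = 0) : IsSquare (5 : K) :=
  ⟨(2 * x + 3 * y) / y, by field_simp; linear_combination -4 * h⟩

/-- `hk` says that the three lines of the configuration through the diagonal point `k` are
concurrent, for the vertices `(0,0), (1,0), (a,b), (c,d), (e,f)` and the centre `(0,1)`. -/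
theorem isSquare_five_of_pentagon_equations {a b c d e f : K}
    (h5 : (a * d - b * d - b * c + b) * e + a * d * f - a * d = 0)
    (h6 : b * c * e + (a - a * c - a * d + b * c) * f - b * c = 0)
    (h7 : (d - b + b * c) * e + (a - a * c) * f - a * d = 0)
    (h8 : (d - b * c - b * d) * e + (a * c + a * d - c) * f - (a * d - b * c) = 0)
    (h9 : a * d * e + (c - a * c + a * d - b * c) * f - a * d = 0)
    (ha : a ≠ 0) (hc : c ≠ 0) (h123 : a * d - d - b * c + b ≠ 0) : IsSquare (5 : K) := by
  have h679 := det_eq_zero_of_dotProduct_eq_zero e f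
    (u := ![b * c, a - a * c - a * d + b * c, -(b * c)])
    (v := ![a * d, c - a * c + a * d - b * c, -(a * d)])
    (w := ![d - b + b * c, a - a * c, -(a * d)])
    (by rw [vec3_dotProduct']; linear_combination h6)
    (by rw [vec3_dotProduct']; linear_combination h9)
    (by rw [vec3_dotProduct']; linear_combination h7)
  have h578 := det_eq_zero_of_dotProduct_eq_zero e f
    (u := ![a * d - b * d - b * c + b, a * d, -(a * d)])
    (v := ![d - b + b * c, a - a * c, -(a * d)])
    (w := ![d - b * c - b * d, a * c + a * d - c, -(a * d - b * c)])
    (by rw [vec3_dotProduct']; linear_combination h5)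
    (by rw [vec3_dotProduct']; linear_combination h7)
    (by rw [vec3_dotProduct']; linear_combination h8)
  simp only [det_fin_three, of_apply, cons_val] at h679 h578
  have hR : b * c ^ 2 * (a + b - 1) - a ^ 2 * d * (c + d - 1) = 0 := by
    refine (mul_eq_zero.mp ?_).resolve_left h123
    linear_combination h679
  have hU : b * c - b * c ^ 2 - c * d - a * d + a * d ^ 2 + 2 * a * c * d = 0 := by
    refine (mul_eq_zero.mp ?_).resolve_left (mul_ne_zero ha h123)
    linear_combination h578
  refine isSquare_five_of_sq_add_three_mul_add_sq_eq_zero (x := d * (c - a - b * c + a * d))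
    (mul_ne_zero hc h123) ?_
  linear_combination (c * d + b * c - 2 * b * c * d - b * c ^ 2 - 2 * a * d + 2 * a * d ^ 2
    + a * c * d) * hU + d * (c + d - 1) * hR

abbrev OnPentagonLine (i j k : Fin 11) : Prop :=
  ∃ L ∈ pentagonLines, i ∈ L ∧ j ∈ L ∧ k ∈ L

def IsPentagonRealization (w : Fin 11 → K × K) : Prop :=
  ∀ i j k : Fin 11, i ≠ j → j ≠ k → i ≠ k →
    (Collinear K ({w i, w j, w k} : Set (K × K)) ↔ OnPentagonLine i j k)

namespace IsPentagonRealization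

variable {w : Fin 11 → K × K}

theorem orient_eq_zero (hw : IsPentagonRealization w) (i j k : Fin 11)
    (h : i ≠ j ∧ j ≠ k ∧ i ≠ k ∧ OnPentagonLine i j k := by decide) :
    orient (w i) (w j) (w k) = 0 :=
  (collinear_iff_orient_eq_zero _ _ _).1 ((hw i j k h.1 h.2.1 h.2.2.1).2 h.2.2.2)

theorem orient_ne_zero (hw : IsPentagonRealization w) (i j k : Fin 11)
    (h : i ≠ j ∧ j ≠ k ∧ i ≠ k ∧ ¬OnPentagonLine i j k := by decide) :
    orient (w i) (w j) (w k) ≠ 0 := fun h0 =>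
  h.2.2.2 ((hw i j k h.1 h.2.1 h.2.2.1).1 ((collinear_iff_orient_eq_zero _ _ _).2 h0))

theorem comp_frameCoords (hw : IsPentagonRealization w) {a b c : K × K}
    (h : orient a b c ≠ 0) : IsPentagonRealization (frameCoords a b c ∘ w) :=
  fun i j k hij hjk hik => by
    rw [← hw i j k hij hjk hik, collinear_iff_orient_eq_zero, collinear_iff_orient_eq_zero]
    simp only [Function.comp_apply, orient_frameCoords h, div_eq_zero_iff, h, or_false]

theorem isSquare_five_of_normalized (hw : IsPentagonRealization w) (h0 : w 0 = (0, 0))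
    (h1 : w 1 = (1, 0)) (h10 : w 10 = (0, 1)) : IsSquare (5 : K) := by
  have h5 := det_lineThrough_eq_zero (hw.orient_eq_zero 0 2 5) (hw.orient_eq_zero 1 3 5)
    (hw.orient_eq_zero 4 10 5)
  have h6 := det_lineThrough_eq_zero (hw.orient_eq_zero 0 2 6) (hw.orient_eq_zero 1 4 6)
    (hw.orient_eq_zero 3 10 6)
  have h7 := det_lineThrough_eq_zero (hw.orient_eq_zero 0 10 7) (hw.orient_eq_zero 1 3 7)
    (hw.orient_eq_zero 2 4 7)
  have h8 := det_lineThrough_eq_zero (hw.orient_eq_zero 0 3 8) (hw.orient_eq_zero 1 10 8)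
    (hw.orient_eq_zero 2 4 8)
  have h9 := det_lineThrough_eq_zero (hw.orient_eq_zero 0 3 9) (hw.orient_eq_zero 1 4 9)
    (hw.orient_eq_zero 2 10 9)
  have ha := hw.orient_ne_zero 0 2 10
  have hc := hw.orient_ne_zero 0 3 10
  have h123 := hw.orient_ne_zero 1 2 3
  simp only [h0, h1, h10, lineThrough, det_fin_three, of_apply,
    cons_val, orient] at h5 h6 h7 h8 h9 ha hc h123
  exact isSquare_five_of_pentagon_equations (a := (w 2).1) (b := (w 2).2) (c := (w 3).1)
    (d := (w 3).2) (e := (w 4).1) (f := (w 4).2) (by linear_combination h5)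
    (by linear_combination -h6) (by linear_combination h7) (by linear_combination h8)
    (by linear_combination -h9) (fun h => ha (by linear_combination h))
    (fun h => hc (by linear_combination h)) (fun h => h123 (by linear_combination h))

theorem isSquare_five (hw : IsPentagonRealization w) : IsSquare (5 : K) := by
  have h := hw.orient_ne_zero 0 1 10
  exact (hw.comp_frameCoords h).isSquare_five_of_normalized (frameCoords_left _ _ _)
    (frameCoords_middle h) (frameCoords_right h)

end IsPentagonRealization

/-- The extended pentagon configuration has no realization with rational
coordinates: there is no injective assignment of 11 points of ℚ² such that
three points are collinear exactly when the corresponding abstract triple lies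
on one of the ten lines of the configuration. -/
theorem no_rational_pentagon_configuration :
    ¬ ∃ w : Fin 11 → ℚ × ℚ, Function.Injective w ∧
      ∀ i j k : Fin 11, i ≠ j → j ≠ k → i ≠ k →
        (Collinear ℚ ({w i, w j, w k} : Set (ℚ × ℚ)) ↔
          ∃ L ∈ pentagonLines, i ∈ L ∧ j ∈ L ∧ k ∈ L) := by
  rintro ⟨w, -, hw⟩
  exact absurd (IsPentagonRealization.isSquare_five hw) (by norm_num)
end

section
/- The extended pentagon configuration can be realized in the plane with all coordinates in the field ℚ(√5). -/
namespace Prod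

section CommRing

variable {R S : Type*} [CommRing R] [CommRing S]

def cross (u v : R × R) : R := u.1 * v.2 - u.2 * v.1

theorem map_cross (f : R →+* S) (u v : R × R) :
    f (cross u v) = cross (f.prodMap f u) (f.prodMap f v) := by
  simp [cross]

end CommRing

section Field

variable {K : Type*} [Field K]

theorem exists_eq_smul_of_cross_eq_zero {u v : K × K} (hu : u ≠ 0) (h : cross u v = 0) :
    ∃ t : K, v = t • u := by
  unfold cross at h
  by_cases hu₁ : u.1 = 0
  · have hu₂ : u.2 ≠ 0 := fun hu₂ => hu (Prod.ext hu₁ hu₂)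
    refine ⟨v.2 / u.2, Prod.ext ?_ ?_⟩ <;> simp only [smul_fst, smul_snd, smul_eq_mul] <;>
      field_simp
    linear_combination -h
  · refine ⟨v.1 / u.1, Prod.ext ?_ ?_⟩ <;> simp only [smul_fst, smul_snd, smul_eq_mul] <;>
      field_simp
    linear_combination h

theorem collinear_iff_cross_eq_zero (A B C : K × K) :
    Collinear K ({A, B, C} : Set (K × K)) ↔ cross (B - A) (C - A) = 0 := by
  rw [collinear_iff_of_mem (Set.mem_insert A {B, C})]
  constructor
  · rintro ⟨v, hv⟩
    obtain ⟨b, rfl⟩ := hv B (by simp)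
    obtain ⟨c, rfl⟩ := hv C (by simp)
    simp only [cross, vadd_eq_add, add_sub_cancel_right, smul_fst, smul_snd, smul_eq_mul]
    ring
  · intro h
    by_cases hBA : B - A = 0
    · rw [sub_eq_zero] at hBA
      subst B
      refine ⟨C - A, ?_⟩
      simp only [Set.mem_insert_iff, Set.mem_singleton_iff]
      rintro p (rfl | rfl | rfl)
      · exact ⟨0, by simp⟩
      · exact ⟨0, by simp⟩
      · exact ⟨1, by simp⟩
    · obtain ⟨t, ht⟩ := exists_eq_smul_of_cross_eq_zero hBA h
      refine ⟨B - A, ?_⟩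
      simp only [Set.mem_insert_iff, Set.mem_singleton_iff]
      rintro p (rfl | rfl | rfl)
      · exact ⟨0, by simp⟩
      · exact ⟨1, by simp⟩
      · exact ⟨t, by rw [← ht, vadd_eq_add, sub_add_cancel]⟩

theorem collinear_prodMap_iff {R : Type*} [CommRing R] {f : R →+* K}
    (hf : Function.Injective f) (A B C : R × R) :
    Collinear K ({f.prodMap f A, f.prodMap f B, f.prodMap f C} : Set (K × K)) ↔
      cross (B - A) (C - A) = 0 := by
  rw [collinear_iff_cross_eq_zero, ← map_sub, ← map_sub, ← map_cross, map_eq_zero_iff f hf]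

end Field

end Prod

theorem Int.five_ne_mul_self (n : ℤ) : (5 : ℤ) ≠ n * n := by
  intro h
  have h₁ : n ≤ 2 := by nlinarith
  have h₂ : -2 ≤ n := by nlinarith
  interval_cases n <;> norm_num at h

/-- The regular pentagon `(4 cos 72k°, 4 sin 72k°)` with the `y`-axis rescaled by
`1 / sin 72°`, which moves every point of the configuration into `ℤ[√5]²`. -/
def pentagonPoint : Fin 11 → ℤ√5 × ℤ√5 :=
  ![(⟨4, 0⟩, ⟨0, 0⟩), (⟨-1, 1⟩, ⟨4, 0⟩), (⟨-1, -1⟩, ⟨-2, 2⟩), (⟨-1, -1⟩, ⟨2, -2⟩),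
    (⟨-1, 1⟩, ⟨-4, 0⟩), (⟨4, -2⟩, ⟨6, -2⟩), (⟨-1, 1⟩, ⟨-8, 4⟩), (⟨-6, 2⟩, ⟨0, 0⟩),
    (⟨4, -2⟩, ⟨-6, 2⟩), (⟨-1, 1⟩, ⟨8, -4⟩), (⟨0, 0⟩, ⟨0, 0⟩)]

theorem pentagonPoint_injective : Function.Injective pentagonPoint := by
  unfold Function.Injective
  decide

theorem cross_pentagonPoint_eq_zero_iff : ∀ i j k : Fin 11, i ≠ j → j ≠ k → i ≠ k →
    (Prod.cross (pentagonPoint j - pentagonPoint i) (pentagonPoint k - pentagonPoint i) = 0 ↔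
      ∃ L ∈ pentagonLines, i ∈ L ∧ j ∈ L ∧ k ∈ L) := by
  decide

noncomputable def sqrt5ToReal : ℤ√5 →+* ℝ := Zsqrtd.toReal (by norm_num)

theorem sqrt5ToReal_injective : Function.Injective sqrt5ToReal :=
  Zsqrtd.toReal_injective _ Int.five_ne_mul_self

theorem exists_rat_sqrt5ToReal_eq (a : ℤ√5) : ∃ p q : ℚ, sqrt5ToReal a = p + q * Real.sqrt 5 :=
  ⟨a.re, a.im, by simp [sqrt5ToReal]⟩

/-- The extended pentagon configuration can be realized in the plane with all
coordinates in ℚ(√5) = {p + q√5 : p, q ∈ ℚ}. -/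
theorem pentagon_configuration_realizable_over_Q_sqrt5 :
    ∃ w : Fin 11 → ℝ × ℝ, Function.Injective w ∧
      (∀ i, (∃ p q : ℚ, (w i).1 = p + q * Real.sqrt 5) ∧
            (∃ p q : ℚ, (w i).2 = p + q * Real.sqrt 5)) ∧
      ∀ i j k : Fin 11, i ≠ j → j ≠ k → i ≠ k →
        (Collinear ℝ ({w i, w j, w k} : Set (ℝ × ℝ)) ↔
          ∃ L ∈ pentagonLines, i ∈ L ∧ j ∈ L ∧ k ∈ L) := by
  have hinj : Function.Injective (sqrt5ToReal.prodMap sqrt5ToReal) :=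
    Prod.map_injective.mpr ⟨sqrt5ToReal_injective, sqrt5ToReal_injective⟩
  refine ⟨sqrt5ToReal.prodMap sqrt5ToReal ∘ pentagonPoint, hinj.comp pentagonPoint_injective,
    fun i => ⟨exists_rat_sqrt5ToReal_eq _, exists_rat_sqrt5ToReal_eq _⟩,
    fun i j k hij hjk hik => ?_⟩
  rw [Function.comp_apply, Function.comp_apply, Function.comp_apply,
    Prod.collinear_prodMap_iff sqrt5ToReal_injective]
  exact cross_pentagonPoint_eq_zero_iff i j k hij hjk hik
end

section
/- Let ℓ(x₁,x₂) = ax₁ + bx₂ + c be an affine functional on ℝ² which is zero on the points vᵢ (i ∈ I⁰), negative on vⱼ (j ∈ I⁻), and positive on vₖ (k ∈ I⁺), where I⁰ ∪ I⁻ ∪ I⁺ = {1,...,n} is a partition. Define the linear functional l̄(x₁,x₂,y₁,...,yₙ) = ax₁ + bx₂ + c·t + Σⱼ αⱼyⱼ (in homogenized form, or affine form ℓ(x₁,x₂) + Σⱼ αⱼyⱼ) with αⱼ = 0 for j ∈ I⁰, αⱼ = −ℓ(x₁ʲ,x₂ʲ) for j ∈ I⁻, and αⱼ = −½ℓ(x₁ʲ,x₂ʲ)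 for j ∈ I⁺. Then l̄ vanishes exactly on the points {v̄ⱼ : j ∈ I⁻} ∪ {v̄ᵢ, v̄̄ᵢ : i ∈ I⁰} ∪ {v̄̄ₖ : k ∈ I⁺} of the Lawrence lifting, and is strictly positive on all other points of the Lawrence lifting. -/
theorem lift_apply_single {E ι : Type*} [Fintype ι] [DecidableEq ι] (ℓ : E → ℝ) (α : ι → ℝ)
    (lbar : E × (ι → ℝ) → ℝ) (hlbar : ∀ p, lbar p = ℓ p.1 + ∑ j, α j * p.2 j)
    (v : E) (i : ι) (t : ℝ) :
    lbar (v, Pi.single i t) = ℓ v + α i * t := by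
  rw [hlbar]
  exact congrArg (ℓ v + ·) (dotProduct_single (v := α) t i)

theorem lawrence_facet_functional_general
    (n : ℕ) (x : Fin n → ℝ × ℝ)
    (ℓ : ℝ × ℝ → ℝ)
    (I0 Im Ip : Finset (Fin n))
    (h0 : ∀ j ∈ I0, ℓ (x j) = 0)
    (hm : ∀ j ∈ Im, ℓ (x j) < 0)
    (hp : ∀ j ∈ Ip, ℓ (x j) > 0)
    (α : Fin n → ℝ)
    (hα : ∀ j, α j = if j ∈ I0 then 0
      else if j ∈ Im then -ℓ (x j) else -(ℓ (x j)) / 2)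
    (vbar vbarbar : Fin n → (ℝ × ℝ) × (Fin n → ℝ))
    (hvbar : ∀ j, vbar j = (x j, Pi.single j 1))
    (hvbarbar : ∀ j, vbarbar j = (x j, Pi.single j 2))
    (lbar : (ℝ × ℝ) × (Fin n → ℝ) → ℝ)
    (hlbar : ∀ p, lbar p = ℓ p.1 + ∑ j, α j * p.2 j) :
    (∀ j ∈ I0, lbar (vbar j) = 0 ∧ lbar (vbarbar j) = 0) ∧
    (∀ j ∈ Im, lbar (vbar j) = 0 ∧ 0 < lbar (vbarbar j)) ∧
    (∀ j ∈ Ip, 0 < lbar (vbar j) ∧ lbar (vbarbar j) = 0) := by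
  simp only [hvbar, hvbarbar, lift_apply_single ℓ α lbar hlbar]
  have not_mem_I0 {j : Fin n} (hj : ℓ (x j) ≠ 0) : j ∉ I0 := fun h => hj (h0 j h)
  have not_mem_Im {j : Fin n} (hj : 0 < ℓ (x j)) : j ∉ Im := fun h => (hm j h).not_gt hj
  refine ⟨fun j hj => ?_, fun j hj => ?_, fun j hj => ?_⟩
  · simp [hα, hj, h0 j hj]
  · have hneg := hm j hj
    rw [hα, if_neg (not_mem_I0 hneg.ne), if_pos hj]
    constructor <;> linarith
  · have hpos := hp j hj
    rw [hα, if_neg (not_mem_I0 hpos.ne'), if_neg (not_mem_Im hpos)]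
    constructor <;> linarith

/-- Given an affine functional ℓ on ℝ² vanishing on the points indexed by I⁰,
negative on those indexed by I⁻ and positive on those indexed by I⁺, the lifted
functional l̄(x,y) = ℓ(x) + Σⱼ αⱼ yⱼ with αⱼ = 0, −ℓ(xⱼ), −½ℓ(xⱼ) for
j ∈ I⁰, I⁻, I⁺ respectively vanishes exactly on
{v̄ⱼ : j ∈ I⁻} ∪ {v̄ᵢ, v̄̄ᵢ : i ∈ I⁰} ∪ {v̄̄ₖ : k ∈ I⁺} and is strictly positive
on the remaining points of the Lawrence lifting. -/
theorem lawrence_facet_functional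
    (n : ℕ) (x : Fin n → ℝ × ℝ) (a b c : ℝ)
    (ℓ : ℝ × ℝ → ℝ) (hℓ : ∀ p, ℓ p = a * p.1 + b * p.2 + c)
    (I0 Im Ip : Finset (Fin n))
    (hpart : ∀ j, (j ∈ I0 ∧ j ∉ Im ∧ j ∉ Ip) ∨ (j ∉ I0 ∧ j ∈ Im ∧ j ∉ Ip) ∨
      (j ∉ I0 ∧ j ∉ Im ∧ j ∈ Ip))
    (h0 : ∀ j ∈ I0, ℓ (x j) = 0)
    (hm : ∀ j ∈ Im, ℓ (x j) < 0)
    (hp : ∀ j ∈ Ip, ℓ (x j) > 0)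
    (α : Fin n → ℝ)
    (hα : ∀ j, α j = if j ∈ I0 then 0
      else if j ∈ Im then -ℓ (x j) else -(ℓ (x j)) / 2)
    (vbar vbarbar : Fin n → (ℝ × ℝ) × (Fin n → ℝ))
    (hvbar : ∀ j, vbar j = (x j, Pi.single j 1))
    (hvbarbar : ∀ j, vbarbar j = (x j, Pi.single j 2))
    (lbar : (ℝ × ℝ) × (Fin n → ℝ) → ℝ)
    (hlbar : ∀ p, lbar p = ℓ p.1 + ∑ j, α j * p.2 j) :
    (∀ j ∈ I0, lbar (vbar j) = 0 ∧ lbar (vbarbar j) = 0) ∧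
    (∀ j ∈ Im, lbar (vbar j) = 0 ∧ 0 < lbar (vbarbar j)) ∧
    (∀ j ∈ Ip, 0 < lbar (vbar j) ∧ lbar (vbarbar j) = 0) :=
  lawrence_facet_functional_general n x ℓ I0 Im Ip h0 hm hp α hα vbar vbarbar hvbar hvbarbar lbar
    hlbar
end
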